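/- arXiv:1606.08253 — 4 statements merged into one kernel-verified Lean document; each statement's English description precedes it below -/
import Mathlib

section
/- Let K, W, t be natural numbers with K ≥ 1 and W + t + 1 ≤ K. Set w := W/K, γ := t/K and g := t + 1 (so g = Kγ + 1). Then (1 − w − wγ/(1−γ))^g ≤ C(K−W, t+1) / C(K, t+1) ≤ (1 − w)^g, where all quantities are real numbers. -/
/-- Ratio of binomials as ratio of products. -/
lemma choose_ratio_eq_prod (n m k : ℕ) (hn : k ≤ n) (hm : k ≤ m) :
    ((n.choose k : ℝ) / (m.choose k : ℝ)) =
      ∏ i ∈ Finset.range k, (((n : ℝ) - i) / ((m : ℝ) - i)) := by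
  have hfac : ((Nat.factorial k : ℕ) : ℝ) ≠ 0 := Nat.cast_ne_zero.2 k.factorial_ne_zero
  have hdesc : ∀ p : ℕ, k ≤ p →
      ((p.descFactorial k : ℕ) : ℝ) = ∏ i ∈ Finset.range k, ((p : ℝ) - i) := by
    intro p hp
    rw [Nat.descFactorial_eq_prod_range, Nat.cast_prod]
    refine Finset.prod_congr rfl fun i hi => ?_
    have : i ≤ p := le_trans (le_of_lt (Finset.mem_range.1 hi)) hp
    push_cast [Nat.cast_sub this]
    ring
  have h1 : ((n.choose k : ℕ) : ℝ) = ((n.descFactorial k : ℕ) : ℝ) / ((Nat.factorial k : ℕ) : ℝ) := by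
    rw [Nat.descFactorial_eq_factorial_mul_choose]
    push_cast
    field_simp
  have h2 : ((m.choose k : ℕ) : ℝ) = ((m.descFactorial k : ℕ) : ℝ) / ((Nat.factorial k : ℕ) : ℝ) := by
    rw [Nat.descFactorial_eq_factorial_mul_choose]
    push_cast
    field_simp
  rw [h1, h2, div_div_div_cancel_right₀, hdesc n hn, hdesc m hm, Finset.prod_div_distrib]
  exact hfac

/-- For naturals `K ≥ 1`, `W + t + 1 ≤ K`, with `w = W/K`, `γ = t/K`, `g = t+1`,
the ratio `C(K−W, t+1)/C(K, t+1)` is sandwiched between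
`(1 − w − wγ/(1−γ))^g` and `(1 − w)^g`. -/
theorem binom_ratio_bounds (K W t : ℕ) (hK : 1 ≤ K) (h : W + t + 1 ≤ K) :
    (1 - (W : ℝ) / K - ((W : ℝ) / K) * ((t : ℝ) / K) / (1 - (t : ℝ) / K)) ^ (t + 1)
        ≤ ((K - W).choose (t + 1) : ℝ) / (K.choose (t + 1) : ℝ) ∧
      ((K - W).choose (t + 1) : ℝ) / (K.choose (t + 1) : ℝ) ≤ (1 - (W : ℝ) / K) ^ (t + 1) := by
  have hWK : W ≤ K := by omega
  have hK0 : (0 : ℝ) < K := by exact_mod_cast Nat.lt_of_lt_of_le (by omega) h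
  have htK : (t : ℝ) + 1 ≤ (K : ℝ) - W := by
    have : (W : ℝ) + t + 1 ≤ K := by exact_mod_cast h
    linarith
  have hcastsub : ((K - W : ℕ) : ℝ) = (K : ℝ) - W := by
    exact Nat.cast_sub hWK
  have hratio : ((K - W).choose (t + 1) : ℝ) / (K.choose (t + 1) : ℝ) =
      ∏ i ∈ Finset.range (t + 1), ((((K - W : ℕ) : ℝ)) - i) / ((K : ℝ) - i) := by
    exact choose_ratio_eq_prod _ _ _ (by omega) (by omega)
  -- rewrite constants
  have hlo : 1 - (W : ℝ) / K - ((W : ℝ) / K) * ((t : ℝ) / K) / (1 - (t : ℝ) / K)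
      = ((K : ℝ) - W - t) / ((K : ℝ) - t) := by
    have h1 : (K : ℝ) ≠ 0 := ne_of_gt hK0
    have h2 : (K : ℝ) - t ≠ 0 := by linarith
    field_simp
    ring
  have hhi : 1 - (W : ℝ) / K = ((K : ℝ) - W) / K := by
    field_simp
  rw [hratio, hlo, hhi, hcastsub]
  have hconst : ∀ c : ℝ, c ^ (t + 1) = ∏ _i ∈ Finset.range (t + 1), c := fun c => by
    rw [Finset.prod_const, Finset.card_range]
  constructor
  · rw [hconst]
    refine Finset.prod_le_prod (fun i _ => ?_) (fun i hi => ?_)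
    · apply div_nonneg <;> linarith
    · have hi' : (i : ℝ) ≤ t := by
        exact_mod_cast Nat.le_of_lt_succ (Finset.mem_range.1 hi)
      rw [div_le_div_iff₀ (by linarith) (by linarith)]
      nlinarith [Nat.cast_nonneg (α := ℝ) W]
  · rw [hconst]
    refine Finset.prod_le_prod (fun i hi => ?_) (fun i hi => ?_)
    · have hi' : (i : ℝ) ≤ t := by
        exact_mod_cast Nat.le_of_lt_succ (Finset.mem_range.1 hi)
      apply div_nonneg <;> linarith
    · have hi' : (i : ℝ) ≤ t := by
        exact_mod_cast Nat.le_of_lt_succ (Finset.mem_range.1 hi)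
      have hi0 : (0 : ℝ) ≤ i := Nat.cast_nonneg i
      rw [div_le_div_iff₀ (by linarith) hK0]
      nlinarith [Nat.cast_nonneg (α := ℝ) W]
end

section
/- Fix a real γ ∈ (0,1) and define T(L) := L(1−γ)/(1+Lγ) for real L ≥ 0. Then for any reals K and W with 0 ≤ W ≤ K, one has T(K−W) + T(W) ≤ 2·T(K). -/
/-- For `γ ∈ (0,1)` and `T(L) = L(1−γ)/(1+Lγ)`, for any reals `0 ≤ W ≤ K` one has
`T(K−W) + T(W) ≤ 2 T(K)`. -/
theorem T_split_le_two (γ : ℝ) (hγ0 : 0 < γ) (hγ1 : γ < 1) (K W : ℝ)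
    (hW : 0 ≤ W) (hWK : W ≤ K) :
    (K - W) * (1 - γ) / (1 + (K - W) * γ) + W * (1 - γ) / (1 + W * γ)
      ≤ 2 * (K * (1 - γ) / (1 + K * γ)) := by
  have h1 : 0 < 1 + (K - W) * γ := by nlinarith
  have h2 : 0 < 1 + W * γ := by nlinarith
  have h3 : 0 < 1 + K * γ := by nlinarith
  rw [div_add_div _ _ h1.ne' h2.ne', ← mul_div_assoc, div_le_div_iff₀ (by positivity) h3]
  have hg : 0 < 1 - γ := by linarith
  nlinarith [mul_nonneg (mul_nonneg hg.le hγ0.le) (sq_nonneg (K - W)),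
    mul_nonneg (mul_nonneg hg.le hγ0.le) (sq_nonneg W),
    mul_nonneg hg.le (le_trans hW hWK)]
end

section
/- Fix a real γ ∈ (0,1) and reals K, W with 0 < W < K. Define T(L) := L(1−γ)/(1+Lγ), g := Kγ + 1, w := W/K, τ̄ := T(W)/(T(W)+T(K−W)), and let τ_t be any real with τ̄ ≤ τ_t ≤ 1. Define the piecewise function T(τ) by: T(τ) = T(W)/τ for 0 < τ < τ̄; T(τ) = min{T(K−W)+T(W), τ_t·T(K)/τ} for τ̄ ≤ τ ≤ τ_t; and T(τ) = T(K) for τ_t < τ ≤ 1. Then for every real G ≥ 2 and every τ ∈ (0,1] with τ ≥ (w/(1+w(g−1)))·(g/G), one has T(τ) ≤ G·T(K). -/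
/-!
Below `τ̄` the delivery time is `T(W)/τ`, and the threshold is just `T(W)/(G·T(K))` in disguise.
Between `τ̄` and `τ_t` it is at most `T(K−W) + T(W) ≤ 2·T(K)`, since `T` is increasing; above `τ_t`
it equals `T(K)`.
-/

/-- The paper's `T(L)`. -/
noncomputable def manDelay (γ L : ℝ) : ℝ := L * (1 - γ) / (1 + L * γ)

section manDelay

variable {γ : ℝ}

lemma manDelay_pos (hγ0 : 0 ≤ γ) (hγ1 : γ < 1) {L : ℝ} (hL : 0 < L) : 0 < manDelay γ L := by
  have : 0 < 1 - γ := by linarith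
  unfold manDelay
  positivity

lemma manDelay_monotoneOn (hγ0 : 0 ≤ γ) (hγ1 : γ ≤ 1) : MonotoneOn (manDelay γ) (Set.Ici 0) := by
  intro a ha b hb hab
  have hda : 0 < 1 + a * γ := by nlinarith [Set.mem_Ici.mp ha]
  have hdb : 0 < 1 + b * γ := by nlinarith [Set.mem_Ici.mp hb]
  unfold manDelay
  rw [div_le_div_iff₀ hda hdb]
  nlinarith [mul_nonneg (sub_nonneg.mpr hab) (sub_nonneg.mpr hγ1)]

lemma manDelay_sub_add_le_two_mul (hγ0 : 0 ≤ γ) (hγ1 : γ ≤ 1) {K W : ℝ} (hW : 0 ≤ W)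
    (hWK : W ≤ K) : manDelay γ (K - W) + manDelay γ W ≤ 2 * manDelay γ K := by
  have hmono := manDelay_monotoneOn hγ0 hγ1
  have hK : (0 : ℝ) ≤ K := hW.trans hWK
  have hKW : manDelay γ (K - W) ≤ manDelay γ K :=
    hmono (Set.mem_Ici.mpr (sub_nonneg.mpr hWK)) (Set.mem_Ici.mpr hK) (by linarith)
  have hWK' : manDelay γ W ≤ manDelay γ K :=
    hmono (Set.mem_Ici.mpr hW) (Set.mem_Ici.mpr hK) hWK
  linarith

lemma threshold_eq_manDelay_div (hγ0 : 0 ≤ γ) (hγ1 : γ < 1) {K W : ℝ} (hW : 0 ≤ W)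
    (hK : 0 < K) (G : ℝ) :
    (W / K) / (1 + (W / K) * ((K * γ + 1) - 1)) * ((K * γ + 1) / G)
      = manDelay γ W / (G * manDelay γ K) := by
  have h1γ : 1 - γ ≠ 0 := by linarith
  have hdW : 1 + W * γ ≠ 0 := by positivity
  have hdK : 1 + K * γ ≠ 0 := by positivity
  have hw : W / K * (K * γ + 1 - 1) = W * γ := by field_simp; ring
  rw [hw]
  unfold manDelay
  field_simp
  ring

end manDelay

theorem threshold_G_general (γ K W : ℝ) (hγ0 : 0 < γ) (hγ1 : γ < 1) (hW : 0 < W) (hWK : W < K)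
    (T : ℝ → ℝ) (hT : ∀ L : ℝ, T L = L * (1 - γ) / (1 + L * γ))
    (τb : ℝ)
    (τt : ℝ)
    (Tf : ℝ → ℝ)
    (hTf1 : ∀ τ : ℝ, 0 < τ → τ < τb → Tf τ = T W / τ)
    (hTf2 : ∀ τ : ℝ, τb ≤ τ → τ ≤ τt → Tf τ = min (T (K - W) + T W) (τt * T K / τ))
    (hTf3 : ∀ τ : ℝ, τt < τ → τ ≤ 1 → Tf τ = T K)
    (G : ℝ) (hG : 2 ≤ G) (τ : ℝ) (hτ0 : 0 < τ) (hτ1 : τ ≤ 1)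
    (hτG : (W / K) / (1 + (W / K) * ((K * γ + 1) - 1)) * ((K * γ + 1) / G) ≤ τ) :
    Tf τ ≤ G * T K := by
  obtain rfl : T = manDelay γ := funext hT
  have hK : 0 < K := hW.trans hWK
  have hTK : 0 < manDelay γ K := manDelay_pos hγ0.le hγ1 hK
  rcases lt_or_ge τ τb with hlow | hmid
  · rw [threshold_eq_manDelay_div hγ0.le hγ1 hW.le hK, div_le_iff₀ (by positivity)] at hτG
    rw [hTf1 τ hτ0 hlow, div_le_iff₀ hτ0]
    linarith
  rcases le_or_gt τ τt with hmid' | hhigh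
  · rw [hTf2 τ hmid hmid']
    calc min (manDelay γ (K - W) + manDelay γ W) (τt * manDelay γ K / τ)
        ≤ manDelay γ (K - W) + manDelay γ W := min_le_left _ _
      _ ≤ 2 * manDelay γ K := manDelay_sub_add_le_two_mul hγ0.le hγ1.le hW.le hWK.le
      _ ≤ G * manDelay γ K := by gcongr
  · rw [hTf3 τ hhigh hτ1]
    exact le_mul_of_one_le_left hTK.le (by linarith)

/-- Corollary 2: with `T(L) = L(1−γ)/(1+Lγ)`, `g = Kγ+1`, `w = W/K`,
`τ̄ = T(W)/(T(W)+T(K−W))`, a threshold `τ̄ ≤ τ_t ≤ 1`, and `Tf` the piecewise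
achievable delay of Theorem 1, for every `G ≥ 2` and `τ ∈ (0,1]` with
`τ ≥ (w/(1+w(g−1)))·(g/G)` one has `Tf(τ) ≤ G·T(K)`. -/
theorem threshold_G (γ K W : ℝ) (hγ0 : 0 < γ) (hγ1 : γ < 1) (hW : 0 < W) (hWK : W < K)
    (T : ℝ → ℝ) (hT : ∀ L : ℝ, T L = L * (1 - γ) / (1 + L * γ))
    (τb : ℝ) (hτb : τb = T W / (T W + T (K - W)))
    (τt : ℝ) (hτtl : τb ≤ τt) (hτtu : τt ≤ 1)
    (Tf : ℝ → ℝ)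
    (hTf1 : ∀ τ : ℝ, 0 < τ → τ < τb → Tf τ = T W / τ)
    (hTf2 : ∀ τ : ℝ, τb ≤ τ → τ ≤ τt → Tf τ = min (T (K - W) + T W) (τt * T K / τ))
    (hTf3 : ∀ τ : ℝ, τt < τ → τ ≤ 1 → Tf τ = T K)
    (G : ℝ) (hG : 2 ≤ G) (τ : ℝ) (hτ0 : 0 < τ) (hτ1 : τ ≤ 1)
    (hτG : (W / K) / (1 + (W / K) * ((K * γ + 1) - 1)) * ((K * γ + 1) / G) ≤ τ) :
    Tf τ ≤ G * T K :=
  threshold_G_general γ K W hγ0 hγ1 hW hWK T hT τb τt Tf hTf1 hTf2 hTf3 G hG τ hτ0 hτ1 hτG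
end

section
/- Fix a real γ ∈ (0,1) and reals K, W with 0 < W < K. Define T(L) := L(1−γ)/(1+Lγ), τ̄ := T(W)/(T(W)+T(K−W)), and let τ_t be any real with τ̄ ≤ τ_t ≤ 1. Define the piecewise function T(τ) by: T(τ) = min{T(K−W)+T(W), τ_t·T(K)/τ} for τ̄ ≤ τ ≤ τ_t; and T(τ) = T(K) for τ_t < τ ≤ 1. Then for every τ ∈ [τ̄, 1], T(τ) ≤ 2·T(K). -/
/-- With `T(L) = L(1−γ)/(1+Lγ)`, `τ̄ = T(W)/(T(W)+T(K−W))`, a threshold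
`τ̄ ≤ τ_t ≤ 1`, and `Tf` the piecewise achievable delay of Theorem 1 on
the regions `[τ̄, τ_t]` and `(τ_t, 1]`, one has `Tf(τ) ≤ 2·T(K)` for every
`τ ∈ [τ̄, 1]`. -/
theorem two_TK_bound (γ K W : ℝ) (hγ0 : 0 < γ) (hγ1 : γ < 1) (hW : 0 < W) (hWK : W < K)
    (T : ℝ → ℝ) (hT : ∀ L : ℝ, T L = L * (1 - γ) / (1 + L * γ))
    (τb : ℝ) (hτb : τb = T W / (T W + T (K - W)))
    (τt : ℝ) (hτtl : τb ≤ τt) (hτtu : τt ≤ 1)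
    (Tf : ℝ → ℝ)
    (hTf2 : ∀ τ : ℝ, τb ≤ τ → τ ≤ τt → Tf τ = min (T (K - W) + T W) (τt * T K / τ))
    (hTf3 : ∀ τ : ℝ, τt < τ → τ ≤ 1 → Tf τ = T K) :
    ∀ τ : ℝ, τb ≤ τ → τ ≤ 1 → Tf τ ≤ 2 * T K := by
  intro τ h1 h2
  have hTmono : ∀ a b : ℝ, 0 ≤ a → a ≤ b → T a ≤ T b := by
    intro a b ha hab
    rw [hT, hT]
    have h1a : (0:ℝ) < 1 + a * γ := by nlinarith
    have h1b : (0:ℝ) < 1 + b * γ := by nlinarith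
    rw [div_le_div_iff₀ h1a h1b]
    nlinarith
  have hTK0 : 0 ≤ T K := by
    rw [hT]
    apply div_nonneg
    · nlinarith
    · nlinarith
  by_cases hc : τ ≤ τt
  · rw [hTf2 τ h1 hc]
    have ha := hTmono (K - W) K (by linarith) (by linarith)
    have hb := hTmono W K (by linarith) hWK.le
    calc min (T (K - W) + T W) (τt * T K / τ) ≤ T (K - W) + T W := min_le_left _ _
      _ ≤ 2 * T K := by linarith
  · rw [hTf3 τ (not_le.1 hc) h2]
    linarith
end
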